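/- Let n ≥ 2, δ ∈ (0,1), let α_1,…,α_n be i.i.d. uniform on [δ,1], and let π(i) = α_i/(α_1+⋯+α_n). Then for every t > 0 and every ν in the probability simplex S_n: P( ‖π − ν‖_1 ≤ t ) ≤ (1/(5√n)) · (2e/(1−δ))^n · t^{n−1}. Consequently, the small ball probability ℒ_1(t) = sup_{ν ∈ S_n} P(‖π − ν‖_1 ≤ t) satisfies ℒ_1(t) ≤ (1/(5√n))·(2e/(1−δ))^n·t^{n−1}. -/

import Mathlib

/-!
The vector `x = (α_1, …, α_n)` has density `(1 - δ)⁻ⁿ` on the cube `[δ, 1]ⁿ`. Put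
`s = ∑ x_i`. The shear `x ↦ (s, (x_j - ν_j s)_{j ≥ 2})` preserves volume and maps the event
`‖x / s - ν‖₁ ≤ t` into the cone `{(s, w) | 0 ≤ s ≤ n, ‖w‖₁ ≤ t s}`, since
`‖x - s ν‖₁ = s ‖x / s - ν‖₁` and dropping one coordinate only decreases the ℓ¹ norm. The cone
has volume `(2t)ⁿ⁻¹ nⁿ / n!`, and Stirling's bound `n! ≥ √(2πn) (n / e)ⁿ` together with
`2 √(2π) ≥ 5` turns this into the stated constant.
-/

open MeasureTheory ProbabilityTheory

/-- ℓ^1 norm of a vector. -/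
noncomputable def l1 {n : ℕ} (v : Fin n → ℝ) : ℝ := ∑ i, |v i|

/-- Canonically scaled skill parameters `π(i) = α_i / (α_1 + ⋯ + α_n)`. -/
noncomputable def piVec {n : ℕ} (β : Fin n → ℝ) : Fin n → ℝ := fun i => β i / ∑ j, β j

open scoped ENNReal Nat

section Shear

variable {α β : Type*} [MeasurableSpace α] [MeasurableSpace β] [AddGroup β] [MeasurableAdd₂ β]
  (μ : Measure α) (ν : Measure β) [SFinite μ] [SFinite ν] [ν.IsAddLeftInvariant]
  {f : α → β}

theorem measurePreserving_prodMk_add_snd (hf : Measurable f) :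
    MeasurePreserving (fun p : α × β => (p.1, f p.1 + p.2)) (μ.prod ν) (μ.prod ν) :=
  (MeasurePreserving.id μ).skew_product ((hf.comp measurable_fst).add measurable_snd)
    (ae_of_all _ fun a => map_add_left_eq_self ν (f a))

theorem measurePreserving_prodMk_add_fst (hf : Measurable f) :
    MeasurePreserving (fun p : β × α => (f p.2 + p.1, p.2)) (ν.prod μ) (ν.prod μ) :=
  (Measure.measurePreserving_swap.comp (measurePreserving_prodMk_add_snd μ ν hf)).comp
    Measure.measurePreserving_swap

end Shear

noncomputable def simplexChart {m : ℕ} (ν x : Fin (m + 1) → ℝ) : ℝ × (Fin m → ℝ) :=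
  (∑ i, x i, fun j => x j.succ - ν j.succ * ∑ i, x i)

theorem measurePreserving_simplexChart {m : ℕ} (ν : Fin (m + 1) → ℝ) :
    MeasurePreserving (simplexChart ν) volume volume := by
  have hsplit := volume_preserving_piFinSuccAbove (fun _ : Fin (m + 1) => ℝ) 0
  have hsum := measurePreserving_prodMk_add_fst (volume : Measure (Fin m → ℝ))
    (volume : Measure ℝ) (f := fun y => ∑ j, y j) (by fun_prop)
  have hshift := measurePreserving_prodMk_add_snd (volume : Measure ℝ)
    (volume : Measure (Fin m → ℝ)) (f := fun s j => -(ν j.succ * s)) (by fun_prop)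
  rw [← Measure.volume_eq_prod] at hsum hshift
  have hcomp : simplexChart ν =
      (fun p : ℝ × (Fin m → ℝ) => (p.1, (fun j : Fin m => -(ν j.succ * p.1)) + p.2)) ∘
      (fun p : ℝ × (Fin m → ℝ) => (∑ j, p.2 j + p.1, p.2)) ∘
      MeasurableEquiv.piFinSuccAbove (fun _ => ℝ) 0 := by
    funext x
    have : ∑ i, x i = ∑ j : Fin m, x j.succ + x 0 := by rw [Fin.sum_univ_succ, add_comm]
    ext j <;> simp [simplexChart, this, neg_add_eq_sub, Fin.tail]
  rw [hcomp]
  exact hshift.comp (hsum.comp hsplit)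

noncomputable def l1Cone (ι : Type*) [Fintype ι] (t N : ℝ) : Set (ℝ × (ι → ℝ)) :=
  {p | p.1 ∈ Set.Icc 0 N ∧ ∑ j, |p.2 j| ≤ t * p.1}

theorem volume_setOf_sum_abs_le {ι : Type*} [Fintype ι] [Nonempty ι] {r : ℝ} (hr : 0 ≤ r) :
    volume {x : ι → ℝ | ∑ i, |x i| ≤ r} =
      ENNReal.ofReal (r ^ Fintype.card ι * 2 ^ Fintype.card ι / (Fintype.card ι)!) := by
  have h := volume_sum_rpow_le (ι := ι) le_rfl r
  simp only [Real.rpow_one, div_one] at h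
  rw [h, one_add_one_eq_two, Real.Gamma_two, Real.Gamma_nat_eq_factorial, mul_one,
    ← ENNReal.ofReal_pow hr, ← ENNReal.ofReal_mul (by positivity), mul_div_assoc]

theorem volume_l1Cone {ι : Type*} [Fintype ι] [Nonempty ι] {t N : ℝ}
    (ht : 0 ≤ t) (hN : 0 ≤ N) :
    volume (l1Cone ι t N) =
      ENNReal.ofReal ((2 * t) ^ Fintype.card ι * N ^ (Fintype.card ι + 1)
        / (Fintype.card ι + 1)!) := by
  set m := Fintype.card ι
  have hmeas : MeasurableSet (l1Cone ι t N) :=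
    (measurable_fst measurableSet_Icc).inter (measurableSet_le
      (by fun_prop : Measurable fun p : ℝ × (ι → ℝ) => ∑ j, |p.2 j|) (by fun_prop))
  have hslice : ∀ a, volume (Prod.mk a ⁻¹' l1Cone ι t N) =
      (Set.Icc 0 N).indicator (fun a => ENNReal.ofReal ((t * a) ^ m * 2 ^ m / m !)) a := by
    intro a
    by_cases ha : a ∈ Set.Icc 0 N
    · simp only [l1Cone, Set.preimage_ofPred_eq, ha, true_and, Set.indicator_of_mem ha]
      exact volume_setOf_sum_abs_le (mul_nonneg ht ha.1)
    · simp only [l1Cone, Set.preimage_ofPred_eq, ha, false_and, Set.ofPred_false, measure_empty,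
        Set.indicator_of_notMem ha]
  have hint : ∫ a in Set.Icc 0 N, (t * a) ^ m * 2 ^ m / m ! =
      (2 * t) ^ m * N ^ (m + 1) / (m + 1)! := by
    rw [integral_Icc_eq_integral_Ioc, ← intervalIntegral.integral_of_le hN]
    simp only [mul_pow, mul_div_assoc, intervalIntegral.integral_mul_const,
      intervalIntegral.integral_const_mul, integral_pow]
    push_cast [Nat.factorial_succ]
    field_simp
    ring
  rw [Measure.volume_eq_prod, Measure.prod_apply hmeas, lintegral_congr hslice,
    lintegral_indicator measurableSet_Icc, ← hint, ofReal_integral_eq_lintegral_ofReal]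
  · exact Continuous.integrableOn_Icc (by fun_prop)
  · exact (ae_restrict_mem measurableSet_Icc).mono fun a ha => by
      have := ha.1; positivity

theorem sum_abs_sub_mul_sum_eq {n : ℕ} {x : Fin n → ℝ} (hx : 0 < ∑ i, x i) (ν : Fin n → ℝ) :
    ∑ i, |x i - ν i * ∑ j, x j| = (∑ j, x j) * l1 (fun i => piVec x i - ν i) := by
  rw [l1, Finset.mul_sum]
  refine Finset.sum_congr rfl fun i _ => ?_
  rw [← abs_of_pos hx, ← abs_mul, abs_of_pos hx, piVec, mul_sub, mul_div_cancel₀ _ hx.ne',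
    mul_comm]

theorem simplexChart_mem_l1Cone {m : ℕ} {ν x : Fin (m + 1) → ℝ} {t N : ℝ} (hx : 0 < ∑ i, x i)
    (hN : ∑ i, x i ≤ N) (h : l1 (fun i => piVec x i - ν i) ≤ t) :
    simplexChart ν x ∈ l1Cone (Fin m) t N := by
  refine ⟨⟨hx.le, hN⟩, ?_⟩
  calc ∑ j : Fin m, |x j.succ - ν j.succ * ∑ i, x i| ≤ ∑ i, |x i - ν i * ∑ j, x j| := by
        rw [Fin.sum_univ_succ (fun i => |x i - ν i * ∑ j, x j|)]
        exact le_add_of_nonneg_left (abs_nonneg _)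
    _ = (∑ i, x i) * l1 (fun i => piVec x i - ν i) := sum_abs_sub_mul_sum_eq hx ν
    _ ≤ t * ∑ i, x i := by rw [mul_comm t]; gcongr

theorem ProbabilityTheory.iIndepFun.map_fun_eq_smul_volume_restrict_pi {ι Ω : Type*} [Fintype ι]
    [MeasurableSpace Ω] {P : Measure Ω} {X : ι → Ω → ℝ} (hX : ∀ i, Measurable (X i))
    (hind : iIndepFun X P) {c : ℝ≥0∞} {s : Set ℝ}
    (hlaw : ∀ i, P.map (X i) = c • volume.restrict s) :
    P.map (fun ω i => X i ω) = c ^ Fintype.card ι • volume.restrict (Set.univ.pi fun _ => s) := by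
  have := hind.isProbabilityMeasure
  rw [hind.map_fun_eq_pi_map fun i => (hX i).aemeasurable]
  refine Measure.pi_eq fun t ht => ?_
  rw [Measure.smul_apply, smul_eq_mul, Measure.restrict_apply (.univ_pi ht), ← Set.pi_inter_distrib,
    volume_pi_pi, ← Finset.card_univ, ← Finset.prod_const, ← Finset.prod_mul_distrib]
  refine Finset.prod_congr rfl fun i _ => ?_
  rw [hlaw, Measure.smul_apply, smul_eq_mul, Measure.restrict_apply (ht i)]

theorem pow_self_div_factorial_le {n : ℕ} (hn : n ≠ 0) :
    (n : ℝ) ^ n / n ! ≤ 2 * Real.exp 1 ^ n / (5 * √n) := by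
  have h5 : 5 ≤ 2 * √(2 * Real.pi) := by
    have : (5 / 2 : ℝ) ^ 2 ≤ 2 * Real.pi := by nlinarith [Real.pi_gt_d2]
    linarith [Real.le_sqrt_of_sq_le this]
  rw [div_le_div_iff₀ (by positivity) (by positivity)]
  calc (n : ℝ) ^ n * (5 * √n) ≤ (n : ℝ) ^ n * (2 * √(2 * Real.pi) * √n) := by gcongr
    _ = 2 * Real.exp 1 ^ n * (√(2 * Real.pi * n) * (n / Real.exp 1) ^ n) := by
      rw [Real.sqrt_mul (by positivity) n, div_pow]
      field_simp
    _ ≤ 2 * Real.exp 1 ^ n * n ! := by gcongr; exact Stirling.le_factorial_stirling n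

theorem pow_mul_two_mul_pow_mul_pow_self_div_factorial_le (m : ℕ) {c t : ℝ} (hc : 0 ≤ c)
    (ht : 0 ≤ t) :
    c ^ (m + 1) * ((2 * t) ^ m * ((m + 1 : ℕ) : ℝ) ^ (m + 1) / (m + 1)!) ≤
      1 / (5 * √(m + 1 : ℕ)) * (2 * Real.exp 1 * c) ^ (m + 1) * t ^ m := by
  set n := m + 1
  calc c ^ n * ((2 * t) ^ m * (n : ℝ) ^ n / n !) = c ^ n * (2 * t) ^ m * ((n : ℝ) ^ n / n !) := by
        ring
    _ ≤ c ^ n * (2 * t) ^ m * (2 * Real.exp 1 ^ n / (5 * √n)) := by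
      gcongr c ^ n * (2 * t) ^ m * ?_; exact pow_self_div_factorial_le m.succ_ne_zero
    _ = 1 / (5 * √n) * (2 * Real.exp 1 * c) ^ n * t ^ m := by
      simp only [n, mul_pow, pow_succ]
      field_simp

theorem measure_l1_piVec_sub_le (n : ℕ) (hn : 2 ≤ n) (δ : ℝ) (hδ : δ ∈ Set.Ioo (0 : ℝ) 1)
    {Ω : Type*} [MeasurableSpace Ω] (P : Measure Ω) (α : Fin n → Ω → ℝ)
    (hmeas : ∀ i, Measurable (α i)) (hindep : iIndepFun α P)
    (hunif : ∀ i, Measure.map (α i) P =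
      ENNReal.ofReal ((1 - δ)⁻¹) • volume.restrict (Set.Icc δ 1))
    {t : ℝ} (ht : 0 ≤ t) (ν : Fin n → ℝ) :
    P {ω | l1 (fun i => piVec (fun j => α j ω) i - ν i) ≤ t}
      ≤ ENNReal.ofReal
          (1 / (5 * Real.sqrt n) * (2 * Real.exp 1 / (1 - δ)) ^ n * t ^ (n - 1)) := by
  obtain ⟨m, rfl⟩ : ∃ m, n = m + 1 := ⟨n - 1, by omega⟩
  have : Nonempty (Fin m) := ⟨⟨0, by omega⟩⟩
  set box : Set (Fin (m + 1) → ℝ) := Set.univ.pi fun _ => Set.Icc δ 1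
  set cone := l1Cone (Fin m) t (m + 1 : ℕ)
  set A := {x : Fin (m + 1) → ℝ | l1 (fun i => piVec x i - ν i) ≤ t}
  have hsub : A ∩ box ⊆ simplexChart ν ⁻¹' cone := by
    rintro x ⟨hxA, hxbox⟩
    have hx : ∀ i, x i ∈ Set.Icc δ 1 := fun i => hxbox i (Set.mem_univ i)
    refine simplexChart_mem_l1Cone ?_ ?_ hxA
    · exact Finset.sum_pos (fun i _ => hδ.1.trans_le (hx i).1) Finset.univ_nonempty
    · simpa using Finset.sum_le_sum fun i (_ : i ∈ Finset.univ) => (hx i).2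
  have hchart := measurePreserving_simplexChart ν
  calc P {ω | l1 (fun i => piVec (fun j => α j ω) i - ν i) ≤ t}
      ≤ P.map (fun ω i => α i ω) A := Measure.le_map_apply (by fun_prop) A
    _ = ENNReal.ofReal ((1 - δ)⁻¹) ^ (m + 1) * volume (A ∩ box) := by
      rw [hindep.map_fun_eq_smul_volume_restrict_pi hmeas hunif, Measure.smul_apply,
        Measure.restrict_apply' (.univ_pi fun _ => measurableSet_Icc), Fintype.card_fin,
        smul_eq_mul]
    _ ≤ ENNReal.ofReal ((1 - δ)⁻¹) ^ (m + 1) * volume cone := by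
      gcongr
      calc volume (A ∩ box) ≤ volume (simplexChart ν ⁻¹' cone) := measure_mono hsub
        _ ≤ volume cone := hchart.map_eq ▸ Measure.le_map_apply hchart.aemeasurable cone
    _ ≤ _ := by
      have hc : 0 ≤ (1 - δ)⁻¹ := inv_nonneg.mpr (sub_pos.mpr hδ.2).le
      rw [volume_l1Cone ht (by positivity), Fintype.card_fin,
        ← ENNReal.ofReal_pow hc, ← ENNReal.ofReal_mul (by positivity), Nat.add_sub_cancel,
        div_eq_mul_inv _ (1 - δ)]
      exact ENNReal.ofReal_le_ofReal (pow_mul_two_mul_pow_mul_pow_self_div_factorial_le m hc ht)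

theorem small_ball_l1_bound_general (n : ℕ) (hn : 2 ≤ n) (δ : ℝ) (hδ : δ ∈ Set.Ioo (0 : ℝ) 1)
    {Ω : Type} [MeasurableSpace Ω] (P : Measure Ω)
    (α : Fin n → Ω → ℝ) (hmeas : ∀ i, Measurable (α i))
    (hindep : iIndepFun α P)
    (hunif : ∀ i, Measure.map (α i) P =
      ENNReal.ofReal ((1 - δ)⁻¹) • volume.restrict (Set.Icc δ 1)) :
    (∀ t > (0 : ℝ), ∀ ν ∈ stdSimplex ℝ (Fin n),
      P {ω | l1 (fun i => piVec (fun j => α j ω) i - ν i) ≤ t}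
        ≤ ENNReal.ofReal
            (1 / (5 * Real.sqrt n) * (2 * Real.exp 1 / (1 - δ)) ^ n * t ^ (n - 1))) ∧
    (∀ t > (0 : ℝ),
      (⨆ ν ∈ stdSimplex ℝ (Fin n),
          P {ω | l1 (fun i => piVec (fun j => α j ω) i - ν i) ≤ t})
        ≤ ENNReal.ofReal
            (1 / (5 * Real.sqrt n) * (2 * Real.exp 1 / (1 - δ)) ^ n * t ^ (n - 1))) :=
  have bound := fun t (ht : t > 0) ν =>
    measure_l1_piVec_sub_le n hn δ hδ P α hmeas hindep hunif ht.le ν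
  ⟨fun t ht ν _ => bound t ht ν, fun t ht => iSup₂_le fun ν _ => bound t ht ν⟩

/-- **Upper bound on the ℓ^1 small ball probability**: if `α_1,…,α_n` are i.i.d. uniform on
`[δ,1]` and `π(i) = α_i/(α_1+⋯+α_n)`, then for every `t > 0` and every `ν` in the probability
simplex, `P(‖π − ν‖_1 ≤ t) ≤ (1/(5√n))·(2e/(1−δ))^n·t^{n−1}`; consequently the small ball
probability `ℒ_1(t)` obeys the same bound. -/
theorem small_ball_l1_bound (n : ℕ) (hn : 2 ≤ n) (δ : ℝ) (hδ : δ ∈ Set.Ioo (0 : ℝ) 1)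
    {Ω : Type} [MeasurableSpace Ω] (P : Measure Ω) [IsProbabilityMeasure P]
    (α : Fin n → Ω → ℝ) (hmeas : ∀ i, Measurable (α i))
    (hindep : iIndepFun α P)
    (hunif : ∀ i, Measure.map (α i) P =
      ENNReal.ofReal ((1 - δ)⁻¹) • volume.restrict (Set.Icc δ 1)) :
    (∀ t > (0 : ℝ), ∀ ν ∈ stdSimplex ℝ (Fin n),
      P {ω | l1 (fun i => piVec (fun j => α j ω) i - ν i) ≤ t}
        ≤ ENNReal.ofReal
            (1 / (5 * Real.sqrt n) * (2 * Real.exp 1 / (1 - δ)) ^ n * t ^ (n - 1))) ∧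
    (∀ t > (0 : ℝ),
      (⨆ ν ∈ stdSimplex ℝ (Fin n),
          P {ω | l1 (fun i => piVec (fun j => α j ω) i - ν i) ≤ t})
        ≤ ENNReal.ofReal
            (1 / (5 * Real.sqrt n) * (2 * Real.exp 1 / (1 - δ)) ^ n * t ^ (n - 1))) :=
  small_ball_l1_bound_general n hn δ hδ P α hmeas hindep hunif
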